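/- Let G be a simple graph with no induced P_2 + P_3 containing an induced 6-cycle v_1, ..., v_6 such that every vertex outside the cycle has at most one neighbour on the cycle. Then no vertex outside the cycle has any neighbour on the cycle. -/
import Mathlib

def HasInducedCopy {α β : Type*} (H : SimpleGraph α) (G : SimpleGraph β) : Prop :=
  ∃ f : α ↪ β, ∀ a b : α, G.Adj (f a) (f b) ↔ H.Adj a b

def p2PlusP3 : SimpleGraph (Fin 5) :=
  SimpleGraph.fromRel (fun a b => (a = 0 ∧ b = 1) ∨ (a = 2 ∧ b = 3) ∨ (a = 3 ∧ b = 4))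

theorem stmt12 {V : Type*} [Fintype V] (G : SimpleGraph V)
    (hp2p3 : ¬ HasInducedCopy p2PlusP3 G)
    (v : Fin 6 → V) (hinj : Function.Injective v)
    (hcyc : ∀ i j : Fin 6, G.Adj (v i) (v j) ↔ (j = i + 1 ∨ i = j + 1))
    (hone : ∀ x : V, x ∉ Set.range v → ∀ i j : Fin 6,
      G.Adj x (v i) → G.Adj x (v j) → i = j) :
    ∀ x : V, x ∉ Set.range v → ∀ i : Fin 6, ¬ G.Adj x (v i) := by
  intro x hx i hadj
  apply hp2p3
  have hxne : ∀ j : Fin 6, x ≠ v j := fun j h => hx ⟨j, h.symm⟩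
  have hnadj : ∀ j : Fin 6, j ≠ i → ¬ G.Adj x (v j) :=
    fun j hj h => hj (hone x hx j i h hadj)
  have h2 : ¬ G.Adj x (v (i+2)) := hnadj _ (by simp)
  have h3 : ¬ G.Adj x (v (i+3)) := hnadj _ (by simp)
  have h4 : ¬ G.Adj x (v (i+4)) := hnadj _ (by simp)
  have hnc : ∀ a b : Fin 6, b ≠ a + 1 → a ≠ b + 1 → ¬ G.Adj (v (i+a)) (v (i+b)) := by
    intro a b h1 h2 h
    rw [hcyc] at h
    rcases h with h | h
    · exact h1 (by rwa [add_assoc, add_right_inj] at h)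
    · exact h2 (by rwa [add_assoc, add_right_inj] at h)
  have hc : ∀ a : Fin 6, G.Adj (v (i+a)) (v (i+(a+1))) :=
    fun a => (hcyc _ _).2 (Or.inl (add_assoc i a 1).symm)
  have hadj0 : G.Adj x (v (i+0)) := by rwa [add_zero]
  have n02 : ¬ G.Adj (v i) (v (i+2)) := by have := hnc 0 2 (by decide) (by decide); rwa [add_zero] at this
  have n03 : ¬ G.Adj (v i) (v (i+3)) := by have := hnc 0 3 (by decide) (by decide); rwa [add_zero] at this
  have n04 : ¬ G.Adj (v i) (v (i+4)) := by have := hnc 0 4 (by decide) (by decide); rwa [add_zero] at this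
  have n24 : ¬ G.Adj (v (i+2)) (v (i+4)) := hnc 2 4 (by decide) (by decide)
  have a23 : G.Adj (v (i+2)) (v (i+3)) := hc 2
  have a34 : G.Adj (v (i+3)) (v (i+4)) := hc 3
  have hwinj : Function.Injective ![x, v (i+0), v (i+2), v (i+3), v (i+4)] := by
    intro a b hab
    fin_cases a <;> fin_cases b <;> simp at hab ⊢ <;>
      first
        | rfl
        | exact hxne _ hab
        | exact hxne _ hab.symm
        | (have := hinj hab; simp at this)
  refine ⟨⟨![x, v (i+0), v (i+2), v (i+3), v (i+4)], hwinj⟩, ?_⟩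
  intro a b
  fin_cases a <;> fin_cases b <;>
    simp [p2PlusP3, SimpleGraph.fromRel] <;>
    first
      | exact hadj
      | exact hadj.symm
      | exact fun h => G.irrefl h
      | exact h2 | exact h3 | exact h4
      | exact fun h => h2 h.symm
      | exact fun h => h3 h.symm
      | exact fun h => h4 h.symm
      | exact a23 | exact a23.symm | exact a34 | exact a34.symm
      | exact n02 | exact n03 | exact n04 | exact n24
      | exact fun h => n02 h.symm
      | exact fun h => n03 h.symm
      | exact fun h => n04 h.symm
      | exact fun h => n24 h.symm
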